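/- arXiv:2208.04772 — 7 statements merged into one kernel-verified Lean document; each statement's English description precedes it below -/
import Mathlib

section
/- A skew left brace A is two-sided if and only if every inner automorphism of the group (A,∘) (i.e. every map b ↦ a∘b∘a̅ for a ∈ A, where a̅ is the inverse of a in (A,∘)) is an automorphism of the skew brace A, i.e. is also an automorphism of the group (A,+). -/
/-- A skew (left) brace: a type with two group structures `(A,+)` and `(A,∘)`
(the latter written multiplicatively) sharing the same identity, satisfying the
left skew brace law `a ∘ (b + c) = a ∘ b − a + a ∘ c`. -/
class SkewBrace (A : Type*) extends AddGroup A, Group A where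
  mul_add_eq : ∀ a b c : A, a * (b + c) = a * b - a + a * c

namespace SkewBrace

variable {A : Type*}

/-- A skew brace is two-sided if `(a + b) ∘ c = a ∘ c − c + b ∘ c`. -/
def IsTwoSided (A : Type*) [SkewBrace A] : Prop :=
  ∀ a b c : A, (a + b) * c = a * c - c + b * c

/-- `a * b = −a + a∘b − b`. -/
def bstar [SkewBrace A] (a b : A) : A := -a + a * b - b

/-- the star operation of the opposite skew brace: `a *ₒₚ b = −b + a∘b − a`. -/
def bstarOp [SkewBrace A] (a b : A) : A := -b + a * b - a

/-- `X * Y`: the additive subgroup generated by all `x * y`, `x ∈ X`, `y ∈ Y`. -/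
def starSet [SkewBrace A] (X Y : Set A) : AddSubgroup A :=
  AddSubgroup.closure {z | ∃ x ∈ X, ∃ y ∈ Y, z = bstar x y}

/-- `A² = A * A`. -/
def sq (A : Type*) [SkewBrace A] : AddSubgroup A := starSet Set.univ Set.univ

/-- `A²ₒₚ`, the additive subgroup generated by all `a *ₒₚ b`. -/
def sqOp (A : Type*) [SkewBrace A] : AddSubgroup A :=
  AddSubgroup.closure {z | ∃ a b : A, z = bstarOp a b}

/-- A skew brace is weakly trivial if `A² ∩ A²ₒₚ = {0}`. -/
def IsWeaklyTrivial (A : Type*) [SkewBrace A] : Prop := sq A ⊓ sqOp A = ⊥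

/-- An ideal of a skew brace: an additive subgroup, normal in `(A,+)` and in
`(A,∘)`, and invariant under all `λ_a : b ↦ −a + a∘b`. -/
structure IsIdeal [SkewBrace A] (I : AddSubgroup A) : Prop where
  add_conj : ∀ a : A, ∀ x ∈ I, a + x - a ∈ I
  mul_conj : ∀ a : A, ∀ x ∈ I, a * x * a⁻¹ ∈ I
  lambda_mem : ∀ a : A, ∀ x ∈ I, -a + a * x ∈ I

/-- The left series `A¹ = A`, `Aⁿ⁺¹ = A * Aⁿ`; `leftSeries A n` is `Aⁿ⁺¹`. -/
def leftSeries (A : Type*) [SkewBrace A] : ℕ → AddSubgroup A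
  | 0 => ⊤
  | n + 1 => starSet Set.univ (leftSeries A n : Set A)

/-- The right series `A⁽¹⁾ = A`, `A⁽ⁿ⁺¹⁾ = A⁽ⁿ⁾ * A`; `rightSeries A n` is `A⁽ⁿ⁺¹⁾`. -/
def rightSeries (A : Type*) [SkewBrace A] : ℕ → AddSubgroup A
  | 0 => ⊤
  | n + 1 => starSet (rightSeries A n : Set A) Set.univ

/-- A skew brace is left nilpotent if its left series reaches `{0}`. -/
def IsLeftNilpotent (A : Type*) [SkewBrace A] : Prop := ∃ n, leftSeries A n = ⊥

/-- A skew brace is right nilpotent if its right series reaches `{0}`. -/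
def IsRightNilpotent (A : Type*) [SkewBrace A] : Prop := ∃ n, rightSeries A n = ⊥

/-- The series `A⁽¹⁾ = A`, `A^[n+1]` generated by the union of `A^[i] * A^[n+1-i]`;
`strongSeries A n` is `A^[n+1]`. -/
def strongSeries (A : Type*) [SkewBrace A] : ℕ → AddSubgroup A
  | 0 => ⊤
  | n + 1 => ⨆ i : Fin (n + 1),
      starSet (strongSeries A i.val : Set A) (strongSeries A (n - i.val) : Set A)
  decreasing_by
  · exact i.isLt
  · have := i.isLt; omega

/-- A skew brace is strongly nilpotent if the series `A^[n]` reaches `{0}`. -/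
def IsStronglyNilpotent (A : Type*) [SkewBrace A] : Prop := ∃ n, strongSeries A n = ⊥

/-- The derived series of a skew brace: `A₁ = A`, `Aₙ₊₁ = Aₙ * Aₙ`;
`derivedSeriesBrace A n` is `Aₙ₊₁`. -/
def derivedSeriesBrace (A : Type*) [SkewBrace A] : ℕ → AddSubgroup A
  | 0 => ⊤
  | n + 1 => starSet (derivedSeriesBrace A n : Set A) (derivedSeriesBrace A n : Set A)

/-- A skew brace is soluble if its derived series reaches `{0}`. -/
def IsSolubleBrace (A : Type*) [SkewBrace A] : Prop := ∃ n, derivedSeriesBrace A n = ⊥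


end SkewBrace

namespace SkewBraceAux
open SkewBrace

variable {A : Type*} [SkewBrace A]

lemma mul_zero' (a : A) : a * 0 = a := by
  have h := SkewBrace.mul_add_eq a 0 0
  rw [add_zero] at h
  have h3 : a * 0 - a + a * 0 = 0 + a * 0 := by rw [← h, zero_add]
  have h4 := add_right_cancel h3
  rw [sub_eq_zero] at h4
  exact h4

lemma one_eq_zero : (1 : A) = 0 := by
  have := mul_zero' (1 : A)
  rw [one_mul] at this
  exact this.symm

lemma zero_mul' (a : A) : (0 : A) * a = a := by
  rw [← one_eq_zero, one_mul]

end SkewBraceAux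

open SkewBrace in
/-- A skew left brace `A` is two-sided if and only if every inner automorphism
`b ↦ a ∘ b ∘ a̅` of `(A,∘)` is also an automorphism of `(A,+)` (i.e. a skew brace
automorphism; it is automatically a bijective `∘`-endomorphism). -/
theorem isTwoSided_iff_inner_automorphisms_additive (A : Type*) [SkewBrace A] :
    IsTwoSided A ↔ ∀ a b c : A, a * (b + c) * a⁻¹ = a * b * a⁻¹ + a * c * a⁻¹ := by
  constructor
  · intro T a b c
    have hneg : ∀ b c : A, (-b) * c = -(b * c - c) + c := by
      intro b c
      have h : (0 : A) * c = b * c - c + (-b) * c := by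
        rw [← add_neg_cancel b]; exact T b (-b) c
      rw [SkewBraceAux.zero_mul'] at h
      have h2 := congrArg (fun z => -(b * c - c) + z) h
      simp only [neg_add_cancel_left] at h2
      exact h2.symm
    calc a * (b + c) * a⁻¹
        = (a * b - a + a * c) * a⁻¹ := by rw [SkewBrace.mul_add_eq]
      _ = (a * b - a) * a⁻¹ - a⁻¹ + (a * c) * a⁻¹ := T _ _ _
      _ = (a * b * a⁻¹ - a⁻¹ + (-a) * a⁻¹) - a⁻¹ + (a * c) * a⁻¹ := by
          rw [sub_eq_add_neg (a * b) a, T (a * b) (-a) a⁻¹]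
      _ = a * b * a⁻¹ + a * c * a⁻¹ := by
          rw [hneg a a⁻¹, mul_inv_cancel, SkewBraceAux.one_eq_zero]
          simp [sub_eq_add_neg, add_assoc]
  · intro H a b c
    have key : ∀ d x y : A, (x - d + y) * d⁻¹ = x * d⁻¹ + y * d⁻¹ := by
      intro d x y
      have h := H d (d⁻¹ * x) (d⁻¹ * y)
      rw [SkewBrace.mul_add_eq, mul_inv_cancel_left, mul_inv_cancel_left] at h
      exact h
    have key2 : ∀ c x y : A, (x - c⁻¹ + y) * c = x * c + y * c := by
      intro c x y
      have h := key c⁻¹ x y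
      rwa [inv_inv] at h
    have aux : ∀ c v : A, (c⁻¹ + v) * c = -c + v * c := by
      intro c v
      have h := key2 c 0 (c⁻¹ + v)
      rw [zero_sub, neg_add_cancel_left, SkewBraceAux.zero_mul'] at h
      rw [h, neg_add_cancel_left]
    have h1 := key2 c a (c⁻¹ + b)
    rw [sub_eq_add_neg, add_assoc, neg_add_cancel_left] at h1
    rw [h1, aux c b, sub_eq_add_neg, add_assoc]
end

section
/- Every weakly trivial skew left brace is two-sided. -/
section Aux
open SkewBrace
variable {A : Type*} [SkewBrace A]

lemma bstar_mem_sq (a b : A) : bstar a b ∈ sq A :=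
  AddSubgroup.subset_closure ⟨a, trivial, b, trivial, rfl⟩

lemma bstarOp_mem_sqOp (a b : A) : bstarOp a b ∈ sqOp A :=
  AddSubgroup.subset_closure ⟨a, b, rfl⟩

lemma bstar_add_right (a b c : A) : bstar a (b + c) = bstar a b + b + bstar a c - b := by
  simp only [bstar, SkewBrace.mul_add_eq, sub_eq_add_neg, neg_add_rev, add_assoc,
    neg_add_cancel_left, add_neg_cancel_left, neg_neg]

lemma bstarOp_add_left (a b c : A) :
    bstarOp a (c + b) = -b + bstarOp a c + b + bstarOp a b := by
  simp only [bstarOp, SkewBrace.mul_add_eq, sub_eq_add_neg, neg_add_rev, add_assoc,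
    neg_add_cancel_left, add_neg_cancel_left, neg_neg]

lemma conj_mem_sq (b : A) {x : A} (hx : x ∈ sq A) : b + x - b ∈ sq A := by
  induction hx using AddSubgroup.closure_induction with
  | mem z hz =>
    obtain ⟨p, -, q, -, rfl⟩ := hz
    have key : b + bstar p q - b = -(bstar p b) + bstar p (b + q) := by
      rw [bstar_add_right]
      simp only [sub_eq_add_neg, neg_add_rev, add_assoc, neg_add_cancel_left]
    rw [key]
    exact add_mem (neg_mem (bstar_mem_sq p b)) (bstar_mem_sq p (b + q))
  | zero => simpa using zero_mem (sq A)
  | add x y hx hy ihx ihy =>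
    have : b + (x + y) - b = (b + x - b) + (b + y - b) := by
      simp only [sub_eq_add_neg, add_assoc, neg_add_cancel_left]
    rw [this]; exact add_mem ihx ihy
  | neg x hx ih =>
    have : b + (-x) - b = -(b + x - b) := by
      simp only [sub_eq_add_neg, neg_add_rev, add_assoc, neg_neg]
    rw [this]; exact neg_mem ih

lemma conj_mem_sqOp (b : A) {x : A} (hx : x ∈ sqOp A) : -b + x + b ∈ sqOp A := by
  induction hx using AddSubgroup.closure_induction with
  | mem z hz =>
    obtain ⟨p, q, rfl⟩ := hz
    have key : -b + bstarOp p q + b = bstarOp p (q + b) - bstarOp p b := by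
      rw [bstarOp_add_left]
      simp only [sub_eq_add_neg, add_assoc, add_neg_cancel_left, add_neg_cancel, add_zero]
    rw [key]
    exact sub_mem (bstarOp_mem_sqOp p (q + b)) (bstarOp_mem_sqOp p b)
  | zero => simpa using zero_mem (sqOp A)
  | add x y hx hy ihx ihy =>
    have : -b + (x + y) + b = (-b + x + b) + (-b + y + b) := by
      simp only [add_assoc, neg_add_cancel_left, add_neg_cancel_left]
    rw [this]; exact add_mem ihx ihy
  | neg x hx ih =>
    have : -b + (-x) + b = -(-b + x + b) := by
      simp only [neg_add_rev, add_assoc, neg_neg]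
    rw [this]; exact neg_mem ih

end Aux

open SkewBrace in
/-- Every weakly trivial skew left brace is two-sided. -/
theorem isTwoSided_of_isWeaklyTrivial (A : Type*) [SkewBrace A]
    (h : IsWeaklyTrivial A) : IsTwoSided A := by
  intro a b c
  set w : A := -(a * c - c + b * c) + (a + b) * c with hw
  have hsq : w ∈ sq A := by
    have hrw : w = -c + (-(bstar b c) + (-b + -(bstar a c) + b) + bstar (a + b) c) + c := by
      simp only [hw, bstar, sub_eq_add_neg, neg_add_rev, neg_neg, add_assoc,
        neg_add_cancel_left, add_neg_cancel_left, neg_add_cancel, add_neg_cancel, add_zero]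
    rw [hrw]
    have h1 : -(bstar b c) + (-b + -(bstar a c) + b) + bstar (a + b) c ∈ sq A := by
      refine add_mem (add_mem (neg_mem (bstar_mem_sq b c)) ?_) (bstar_mem_sq (a + b) c)
      have := conj_mem_sq (-b) (neg_mem (bstar_mem_sq a c))
      simpa [sub_eq_add_neg] using this
    simpa [sub_eq_add_neg] using conj_mem_sq (-c) h1
  have hop : w ∈ sqOp A := by
    have hrw : w = -b + (-(bstarOp b c) + (-a + (-(bstarOp a c) + bstarOp (a + b) c) + a)) + b := by
      simp only [hw, bstarOp, sub_eq_add_neg, neg_add_rev, neg_neg, add_assoc,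
        neg_add_cancel_left, add_neg_cancel_left, neg_add_cancel, add_neg_cancel, add_zero]
    rw [hrw]
    refine conj_mem_sqOp b ?_
    refine add_mem (neg_mem (bstarOp_mem_sqOp b c)) ?_
    exact conj_mem_sqOp a (add_mem (neg_mem (bstarOp_mem_sqOp a c)) (bstarOp_mem_sqOp (a + b) c))
  have hz : w = 0 := by
    have : w ∈ sq A ⊓ sqOp A := ⟨hsq, hop⟩
    rw [h] at this
    simpa using this
  have := neg_add_eq_zero.mp hz
  exact this.symm
end

section
/- Let A be a weakly trivial skew brace. Then the group (A,+) is soluble if and only if the group (A,∘) is soluble, and in that case their derived lengths coincide and A is soluble as a skew brace (i.e. the derived series A_1 = A, A_{n+1} = A_n * A_n reaches {0}). -/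
namespace SkewBrace

section Aux

variable {A : Type*} [SkewBrace A]

lemma aux_mul_zero (a : A) : a * (0 : A) = a := by
  have h := mul_add_eq a 0 0
  rw [add_zero] at h
  have h2 : a * (0 : A) + (-a + a * 0) = a * 0 + 0 := by
    rw [add_zero, ← add_assoc, ← sub_eq_add_neg]
    exact h.symm
  exact (neg_add_eq_zero.mp (add_left_cancel h2)).symm

lemma aux_one_eq_zero : (1 : A) = 0 := by
  have h := aux_mul_zero (1 : A)
  rw [one_mul] at h
  exact h.symm

lemma aux_bstar_add (a b c : A) : bstar a (b + c) = bstar a b + b + bstar a c - b := by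
  simp only [bstar, mul_add_eq, sub_eq_add_neg, neg_add_rev, add_assoc,
    neg_add_cancel_left, add_neg_cancel_left]

lemma aux_bstarOp_add (a b c : A) :
    bstarOp a (c + b) = -b + bstarOp a c + (b + bstarOp a b) := by
  simp only [bstarOp, mul_add_eq, sub_eq_add_neg, neg_add_rev, add_assoc,
    neg_add_cancel_left, add_neg_cancel_left]

lemma aux_mem_sq (a b : A) : bstar a b ∈ sq A :=
  AddSubgroup.subset_closure ⟨a, trivial, b, trivial, rfl⟩

lemma aux_mem_sqOp (a b : A) : bstarOp a b ∈ sqOp A :=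
  AddSubgroup.subset_closure ⟨a, b, rfl⟩

lemma aux_conj_bstar (g a b : A) : g + bstar a b + -g ∈ sq A := by
  have h := aux_bstar_add a g b
  have e : g + bstar a b + -g = -(bstar a g) + bstar a (g + b) := by
    rw [h]
    simp only [sub_eq_add_neg, neg_add_rev, add_assoc, neg_add_cancel_left]
  rw [e]
  exact add_mem (neg_mem (aux_mem_sq a g)) (aux_mem_sq a (g + b))

lemma aux_conj_bstarOp (g a b : A) : g + bstarOp a b + -g ∈ sqOp A := by
  have h := aux_bstarOp_add a (-g) b
  have e : g + bstarOp a b + -g = bstarOp a (b + -g) + -(bstarOp a (-g)) := by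
    rw [h]
    simp only [neg_neg, add_assoc, add_neg_cancel_left, add_neg_cancel,
      add_zero]
  rw [e]
  exact add_mem (aux_mem_sqOp a (b + -g)) (neg_mem (aux_mem_sqOp a (-g)))

instance : (sq A).Normal := by
  constructor
  intro x hx g
  refine AddSubgroup.closure_induction
    (p := fun x _ => g + x + -g ∈ sq A) ?_ ?_ ?_ ?_ hx
  · rintro z ⟨a, -, b, -, rfl⟩
    exact aux_conj_bstar g a b
  · simpa using zero_mem (sq A)
  · intro x y _ _ hx hy
    have e : g + (x + y) + -g = (g + x + -g) + (g + y + -g) := by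
      simp only [add_assoc, neg_add_cancel_left]
    rw [e]; exact add_mem hx hy
  · intro x _ hx
    have e : g + -x + -g = -(g + x + -g) := by
      simp only [neg_add_rev, neg_neg, add_assoc]
    rw [e]; exact neg_mem hx

instance : (sqOp A).Normal := by
  constructor
  intro x hx g
  refine AddSubgroup.closure_induction
    (p := fun x _ => g + x + -g ∈ sqOp A) ?_ ?_ ?_ ?_ hx
  · rintro z ⟨a, b, rfl⟩
    exact aux_conj_bstarOp g a b
  · simpa using zero_mem (sqOp A)
  · intro x y _ _ hx hy
    have e : g + (x + y) + -g = (g + x + -g) + (g + y + -g) := by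
      simp only [add_assoc, neg_add_cancel_left]
    rw [e]; exact add_mem hx hy
  · intro x _ hx
    have e : g + -x + -g = -(g + x + -g) := by
      simp only [neg_add_rev, neg_neg, add_assoc]
    rw [e]; exact neg_mem hx

lemma aux_gamma_key (a b : A) : -(a + b) + a * b ∈ sq A := by
  have e : -(a + b) + a * b = -b + bstar a b + -(-b) := by
    simp only [bstar, sub_eq_add_neg, neg_add_rev, neg_neg, add_assoc,
      neg_add_cancel, add_zero]
  rw [e]
  exact aux_conj_bstar (-b) a b

lemma aux_beta_key (a b : A) : -(b + a) + a * b ∈ sqOp A := by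
  have e : -(b + a) + a * b = -a + bstarOp a b + -(-a) := by
    simp only [bstarOp, sub_eq_add_neg, neg_add_rev, neg_neg, add_assoc,
      neg_add_cancel, add_zero]
  rw [e]
  exact aux_conj_bstarOp (-a) a b

end Aux

section Homs

variable (A : Type*) [SkewBrace A]

/-- quotient map to `A/A²`. -/
def gammaHom : A →+ A ⧸ sq A := QuotientAddGroup.mk' (sq A)

/-- quotient map to `A/A²ₒₚ`. -/
def betaHom : A →+ A ⧸ sqOp A := QuotientAddGroup.mk' (sqOp A)

variable {A}

lemma gammaHom_mul (a b : A) : gammaHom A (a * b) = gammaHom A a + gammaHom A b := by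
  have e : a * b = (a + b) + (-(a + b) + a * b) := by
    rw [add_neg_cancel_left]
  rw [e, map_add, map_add]
  have h0 : gammaHom A (-(a + b) + a * b) = 0 :=
    (QuotientAddGroup.eq_zero_iff _).mpr (aux_gamma_key a b)
  rw [h0, add_zero]

lemma betaHom_mul (a b : A) : betaHom A (a * b) = betaHom A b + betaHom A a := by
  have e : a * b = (b + a) + (-(b + a) + a * b) := by
    rw [add_neg_cancel_left]
  rw [e, map_add, map_add]
  have h0 : betaHom A (-(b + a) + a * b) = 0 :=
    (QuotientAddGroup.eq_zero_iff _).mpr (aux_beta_key a b)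
  rw [h0, add_zero]

variable (A)

/-- `γ` as a multiplicative hom `(A,∘) →* Multiplicative (A/A²)`. -/
def gammaMul : A →* Multiplicative (A ⧸ sq A) :=
  MonoidHom.mk' (fun a => Multiplicative.ofAdd (gammaHom A a))
    (fun a b => by simp [gammaHom_mul])

/-- `-β` as a multiplicative hom `(A,∘) →* Multiplicative (A/A²ₒₚ)`. -/
def betaMul : A →* Multiplicative (A ⧸ sqOp A) :=
  MonoidHom.mk' (fun a => Multiplicative.ofAdd (-(betaHom A a)))
    (fun a b => by
      show Multiplicative.ofAdd (-(betaHom A (a * b)))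
        = Multiplicative.ofAdd (-(betaHom A a) + -(betaHom A b))
      rw [betaHom_mul, neg_add_rev])

lemma gammaMul_apply (a : A) : gammaMul A a = Multiplicative.ofAdd (gammaHom A a) := rfl

lemma betaMul_apply (a : A) : betaMul A a = Multiplicative.ofAdd (-(betaHom A a)) := rfl

lemma gammaMul_surjective : Function.Surjective (gammaMul A) := by
  intro q
  obtain ⟨a, ha⟩ := QuotientAddGroup.mk'_surjective (sq A) (Multiplicative.toAdd q)
  exact ⟨a, by rw [gammaMul_apply]; show Multiplicative.ofAdd (QuotientAddGroup.mk' (sq A) a) = q; rw [ha]; rfl⟩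

lemma betaMul_surjective : Function.Surjective (betaMul A) := by
  intro q
  obtain ⟨a, ha⟩ := QuotientAddGroup.mk'_surjective (sqOp A) (-(Multiplicative.toAdd q))
  refine ⟨a, ?_⟩
  rw [betaMul_apply]
  show Multiplicative.ofAdd (-(QuotientAddGroup.mk' (sqOp A) a)) = q
  rw [ha, neg_neg]; rfl

/-- `γ` as a hom `Multiplicative A →* Multiplicative (A/A²)`. -/
def gammaAdd : Multiplicative A →* Multiplicative (A ⧸ sq A) :=
  AddMonoidHom.toMultiplicative (gammaHom A)

/-- `β` as a hom `Multiplicative A →* Multiplicative (A/A²ₒₚ)`. -/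
def betaAdd : Multiplicative A →* Multiplicative (A ⧸ sqOp A) :=
  AddMonoidHom.toMultiplicative (betaHom A)

lemma gammaAdd_surjective : Function.Surjective (gammaAdd A) := by
  intro q
  obtain ⟨a, ha⟩ := QuotientAddGroup.mk'_surjective (sq A) (Multiplicative.toAdd q)
  exact ⟨Multiplicative.ofAdd a, by
    show Multiplicative.ofAdd (QuotientAddGroup.mk' (sq A) a) = q
    rw [ha]; rfl⟩

lemma betaAdd_surjective : Function.Surjective (betaAdd A) := by
  intro q
  obtain ⟨a, ha⟩ := QuotientAddGroup.mk'_surjective (sqOp A) (Multiplicative.toAdd q)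
  exact ⟨Multiplicative.ofAdd a, by
    show Multiplicative.ofAdd (QuotientAddGroup.mk' (sqOp A) a) = q
    rw [ha]; rfl⟩

end Homs

section Main

lemma aux_derived_bot {G : Type*} [Group G] {n : ℕ} (h : derivedSeries G n = ⊥) :
    derivedSeries G (n + 1) = ⊥ := by
  rw [derivedSeries_succ, h, Subgroup.commutator_bot_left]

variable (A : Type*) [SkewBrace A]

lemma aux_brace_le_sq (m : ℕ) : derivedSeriesBrace A (m + 1) ≤ sq A := by
  show starSet _ _ ≤ sq A
  exact AddSubgroup.closure_mono (by rintro z ⟨u, -, v, -, rfl⟩; exact ⟨u, trivial, v, trivial, rfl⟩)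

open scoped commutatorElement in
lemma aux_brace_le : ∀ m : ℕ, ∀ x ∈ derivedSeriesBrace A m,
    Multiplicative.ofAdd (betaHom A x) ∈ derivedSeries (Multiplicative (A ⧸ sqOp A)) m := by
  intro m
  induction m with
  | zero => intro x _; exact Subgroup.mem_top _
  | succ m ih =>
    intro x hx
    let D := derivedSeries (Multiplicative (A ⧸ sqOp A)) (m + 1)
    let S : AddSubgroup A := AddSubgroup.comap (betaHom A) (Subgroup.toAddSubgroup' D)
    have key : derivedSeriesBrace A (m + 1) ≤ S := by
      show starSet _ _ ≤ S
      refine (AddSubgroup.closure_le S).mpr ?_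
      rintro z ⟨u, hu, v, hv, rfl⟩
      show Multiplicative.ofAdd (betaHom A (bstar u v)) ∈ D
      have hbu := ih u hu
      have hbv := ih v hv
      have e : betaHom A (bstar u v)
          = -(betaHom A u) + betaHom A v + betaHom A u + -(betaHom A v) := by
        have : bstar u v = -u + (u * v) + -v := by
          simp [bstar, sub_eq_add_neg]
        rw [this, map_add, map_add, map_neg, map_neg, betaHom_mul u v, ← add_assoc]
      rw [e]
      have e2 : Multiplicative.ofAdd
            (-(betaHom A u) + betaHom A v + betaHom A u + -(betaHom A v))
          = ⁅(Multiplicative.ofAdd (betaHom A u))⁻¹, Multiplicative.ofAdd (betaHom A v)⁆ := by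
        rw [commutatorElement_def, inv_inv]
        rfl
      rw [e2]
      exact Subgroup.commutator_mem_commutator (inv_mem hbu) hbv
    exact key hx

end Main

end SkewBrace

open SkewBrace in
/-- For a weakly trivial skew brace, `(A,+)` is soluble iff `(A,∘)` is soluble; in that
case their derived lengths coincide (the derived series reach `⊥` at the same indices)
and `A` is soluble as a skew brace. -/
theorem isWeaklyTrivial_solvable_iff (A : Type*) [SkewBrace A] (h : IsWeaklyTrivial A) :
    (IsSolvable (Multiplicative A) ↔ IsSolvable A) ∧
    (IsSolvable A →
      (∀ n, derivedSeries (Multiplicative A) n = ⊥ ↔ derivedSeries A n = ⊥) ∧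
      IsSolubleBrace A) := by
  have main : ∀ n, derivedSeries (Multiplicative A) n = ⊥ ↔ derivedSeries A n = ⊥ := by
    intro n
    constructor
    · intro hb
      rw [eq_bot_iff]
      intro x hx
      have h2 : gammaMul A x ∈ derivedSeries (Multiplicative (A ⧸ sq A)) n := by
        rw [← map_derivedSeries_eq (gammaMul_surjective A) n]
        exact Subgroup.mem_map_of_mem _ hx
      rw [← map_derivedSeries_eq (gammaAdd_surjective A) n, hb, Subgroup.map_bot,
        Subgroup.mem_bot] at h2
      have h3 : betaMul A x ∈ derivedSeries (Multiplicative (A ⧸ sqOp A)) n := by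
        rw [← map_derivedSeries_eq (betaMul_surjective A) n]
        exact Subgroup.mem_map_of_mem _ hx
      rw [← map_derivedSeries_eq (betaAdd_surjective A) n, hb, Subgroup.map_bot,
        Subgroup.mem_bot] at h3
      have hx2 : x ∈ sq A := by
        have h0 : gammaHom A x = 0 := by
          simpa [gammaMul_apply] using congrArg Multiplicative.toAdd h2
        exact (QuotientAddGroup.eq_zero_iff x).mp h0
      have hx1 : x ∈ sqOp A := by
        have h0 : betaHom A x = 0 := by
          simpa [betaMul_apply] using congrArg Multiplicative.toAdd h3
        exact (QuotientAddGroup.eq_zero_iff x).mp h0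
      have hx0 : x ∈ sq A ⊓ sqOp A := ⟨hx2, hx1⟩
      rw [h] at hx0
      rw [AddSubgroup.mem_bot] at hx0
      rw [Subgroup.mem_bot, hx0]
      exact aux_one_eq_zero.symm
    · intro hb
      rw [eq_bot_iff]
      intro x hx
      have h2 : gammaAdd A x ∈ derivedSeries (Multiplicative (A ⧸ sq A)) n := by
        rw [← map_derivedSeries_eq (gammaAdd_surjective A) n]
        exact Subgroup.mem_map_of_mem _ hx
      rw [← map_derivedSeries_eq (gammaMul_surjective A) n, hb, Subgroup.map_bot,
        Subgroup.mem_bot] at h2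
      have h3 : betaAdd A x ∈ derivedSeries (Multiplicative (A ⧸ sqOp A)) n := by
        rw [← map_derivedSeries_eq (betaAdd_surjective A) n]
        exact Subgroup.mem_map_of_mem _ hx
      rw [← map_derivedSeries_eq (betaMul_surjective A) n, hb, Subgroup.map_bot,
        Subgroup.mem_bot] at h3
      have hx2 : Multiplicative.toAdd x ∈ sq A := by
        have h0 : gammaHom A (Multiplicative.toAdd x) = 0 := by
          exact congrArg Multiplicative.toAdd h2
        exact (QuotientAddGroup.eq_zero_iff _).mp h0
      have hx1 : Multiplicative.toAdd x ∈ sqOp A := by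
        have h0 : betaHom A (Multiplicative.toAdd x) = 0 := by
          exact congrArg Multiplicative.toAdd h3
        exact (QuotientAddGroup.eq_zero_iff _).mp h0
      have hx0 : Multiplicative.toAdd x ∈ sq A ⊓ sqOp A := ⟨hx2, hx1⟩
      rw [h] at hx0
      rw [AddSubgroup.mem_bot] at hx0
      rw [Subgroup.mem_bot]
      simpa using congrArg Multiplicative.ofAdd hx0
  refine ⟨?_, fun hs => ⟨main, ?_⟩⟩
  · show Group.IsSolvable _ ↔ Group.IsSolvable _
    rw [isSolvable_def, isSolvable_def]
    exact ⟨fun ⟨n, hn⟩ => ⟨n, (main n).mp hn⟩, fun ⟨n, hn⟩ => ⟨n, (main n).mpr hn⟩⟩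
  · obtain ⟨n, hn⟩ := (isSolvable_def A).mp hs
    have hQ : derivedSeries (Multiplicative (A ⧸ sqOp A)) (n + 1) = ⊥ := by
      refine aux_derived_bot ?_
      rw [← map_derivedSeries_eq (betaMul_surjective A) n, hn, Subgroup.map_bot]
    refine ⟨n + 1, ?_⟩
    rw [eq_bot_iff]
    intro x hx
    have hx2 : x ∈ sq A := aux_brace_le_sq A n hx
    have hx1 : x ∈ sqOp A := by
      have hm := aux_brace_le A (n + 1) x hx
      rw [hQ, Subgroup.mem_bot] at hm
      have hb0 : betaHom A x = 0 := by
        simpa using congrArg Multiplicative.toAdd hm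
      exact (QuotientAddGroup.eq_zero_iff x).mp hb0
    have hx0 : x ∈ sq A ⊓ sqOp A := ⟨hx2, hx1⟩
    rw [h] at hx0
    exact hx0
end

section
/- Let A be a weakly trivial skew brace. Then the following are equivalent: (1) A is left nilpotent; (2) A is right nilpotent; (3) A is strongly nilpotent. -/
namespace SBProof
open SkewBrace AddSubgroup

variable {A : Type*} [SkewBrace A]


lemma star_add (a b c : A) : bstar a (b + c) = bstar a b + b + bstar a c - b := by
  simp only [bstar, SkewBrace.mul_add_eq, sub_eq_add_neg, neg_add_rev, neg_neg, add_assoc,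
    neg_add_cancel_left, add_neg_cancel_left, neg_add_cancel, add_neg_cancel, add_zero, zero_add]

lemma conj_bstar (g a b : A) : g + bstar a b - g = -(bstar a g) + bstar a (g + b) := by
  simp only [bstar, SkewBrace.mul_add_eq, sub_eq_add_neg, neg_add_rev, neg_neg, add_assoc,
    neg_add_cancel_left, add_neg_cancel_left, neg_add_cancel, add_neg_cancel, add_zero, zero_add]

lemma opstar_decomp1 (x a : A) :
    bstarOp x a = (-a + (x + bstar x a) + a) + (-x) := by
  simp only [bstar, bstarOp, sub_eq_add_neg, neg_add_rev, neg_neg, add_assoc,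
    neg_add_cancel_left, add_neg_cancel_left, neg_add_cancel, add_neg_cancel, add_zero, zero_add]

lemma opstar_decomp2 (a x : A) :
    bstarOp a x = -x + ((a + bstar a x - a) + (a + x - a)) := by
  simp only [bstar, bstarOp, sub_eq_add_neg, neg_add_rev, neg_neg, add_assoc,
    neg_add_cancel_left, add_neg_cancel_left, neg_add_cancel, add_neg_cancel, add_zero, zero_add]


lemma mem_starSet {X Y : Set A} {x y : A} (hx : x ∈ X) (hy : y ∈ Y) :
    bstar x y ∈ starSet X Y :=
  subset_closure ⟨x, hx, y, hy, rfl⟩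

lemma bstar_mem_sq (a b : A) : bstar a b ∈ sq A :=
  mem_starSet trivial trivial

lemma bstarOp_mem_sqOp (a b : A) : bstarOp a b ∈ sqOp A :=
  subset_closure ⟨a, b, rfl⟩

lemma starSet_mono {X X' Y Y' : Set A} (hX : X ⊆ X') (hY : Y ⊆ Y') :
    starSet X Y ≤ starSet X' Y' := by
  apply AddSubgroup.closure_mono
  rintro z ⟨x, hx, y, hy, rfl⟩
  exact ⟨x, hX hx, y, hY hy, rfl⟩

/-- conjugation as an additive hom -/
def conjHom (g : A) : A →+ A :=
  AddMonoidHom.mk' (fun x => g + x - g) (by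
    intro a b
    simp only [sub_eq_add_neg, neg_add_rev, neg_neg, add_assoc,
      neg_add_cancel_left, add_neg_cancel_left, neg_add_cancel, add_neg_cancel,
      add_zero, zero_add])

lemma sq_conj (g : A) {x : A} (hx : x ∈ sq A) : g + x - g ∈ sq A := by
  have : sq A ≤ (sq A).comap (conjHom g) := by
    apply (closure_le _).mpr
    rintro z ⟨a, -, b, -, rfl⟩
    show g + bstar a b - g ∈ sq A
    rw [conj_bstar]
    exact add_mem (neg_mem (bstar_mem_sq a g)) (bstar_mem_sq a (g + b))
  exact this hx


lemma left_le_sq (n : ℕ) : leftSeries A (n + 1) ≤ sq A :=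
  starSet_mono (fun _ _ => trivial) (fun _ _ => trivial)

section WT
variable (h : IsWeaklyTrivial A)
include h

lemma wt_zero {x : A} (h1 : x ∈ sq A) (h2 : x ∈ sqOp A) : x = 0 := by
  have : x ∈ sq A ⊓ sqOp A := ⟨h1, h2⟩
  rw [h] at this
  exact AddSubgroup.mem_bot.mp this

lemma bstarOp_eq_zero_left {x : A} (hx : x ∈ sq A) (a : A) : bstarOp x a = 0 := by
  apply wt_zero h _ (bstarOp_mem_sqOp x a)
  rw [opstar_decomp1]
  have := sq_conj (-a) (add_mem hx (bstar_mem_sq x a))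
  rw [sub_neg_eq_add] at this
  exact add_mem this (neg_mem hx)

lemma bstarOp_eq_zero_right {x : A} (hx : x ∈ sq A) (a : A) : bstarOp a x = 0 := by
  apply wt_zero h _ (bstarOp_mem_sqOp a x)
  rw [opstar_decomp2]
  exact add_mem (neg_mem hx) (add_mem (sq_conj a (bstar_mem_sq a x)) (sq_conj a hx))

/-- for `x ∈ A²`, `a * x` is the additive commutator `-a + x + a - x`. -/
lemma bstar_comm_right {x : A} (hx : x ∈ sq A) (a : A) :
    bstar a x = -a + x + a - x := by
  have h0 := bstarOp_eq_zero_right h hx a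
  have hax : a * x = x + a := by
    have := congrArg (fun z => x + z + a) h0
    simpa [bstarOp, sub_eq_add_neg, neg_add_rev, neg_neg, add_assoc,
      neg_add_cancel_left, add_neg_cancel_left, neg_add_cancel, add_neg_cancel,
      add_zero, zero_add] using this
  simp [bstar, hax, sub_eq_add_neg, add_assoc]

/-- for `x ∈ A²`, `x * a` is the additive commutator `-x + a + x - a`. -/
lemma bstar_comm_left {x : A} (hx : x ∈ sq A) (a : A) :
    bstar x a = -x + a + x - a := by
  have h0 := bstarOp_eq_zero_left h hx a
  have hax : x * a = a + x := by
    have := congrArg (fun z => a + z + x) h0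
    simpa [bstarOp, sub_eq_add_neg, neg_add_rev, neg_neg, add_assoc,
      neg_add_cancel_left, add_neg_cancel_left, neg_add_cancel, add_neg_cancel,
      add_zero, zero_add] using this
  simp [bstar, hax, sub_eq_add_neg, add_assoc]

lemma LR_eq : ∀ n, leftSeries A n = rightSeries A n := by
  intro n
  induction n with
  | zero => rfl
  | succ n ih =>
    show starSet Set.univ (leftSeries A n : Set A)
        = starSet (rightSeries A n : Set A) Set.univ
    rw [← ih]
    match n with
    | 0 => rw [leftSeries]; rfl
    | m + 1 =>
      have hsub : (leftSeries A (m + 1) : Set A) ⊆ (sq A : Set A) := left_le_sq m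
      apply le_antisymm
      · apply (AddSubgroup.closure_le _).mpr
        rintro z ⟨a, -, y, hy, rfl⟩
        have hy' : y ∈ sq A := hsub hy
        rw [bstar_comm_right h hy' a]
        have key : bstar (-y) (-a) = -(-a + y + a - y) := by
          rw [bstar_comm_left h (neg_mem hy') (-a)]
          simp only [sub_eq_add_neg, neg_add_rev, neg_neg, add_assoc]
        have : bstar (-y) (-a) ∈ starSet (leftSeries A (m+1) : Set A) Set.univ :=
          mem_starSet (neg_mem hy) trivial
        rw [key] at this
        simpa using neg_mem this
      · apply (AddSubgroup.closure_le _).mpr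
        rintro z ⟨y, hy, a, -, rfl⟩
        have hy' : y ∈ sq A := hsub hy
        rw [bstar_comm_left h hy' a]
        have key : bstar (-a) (-y) = -(-y + a + y - a) := by
          rw [bstar_comm_right h (neg_mem hy') (-a)]
          simp only [sub_eq_add_neg, neg_add_rev, neg_neg, add_assoc]
        have : bstar (-a) (-y) ∈ starSet Set.univ (leftSeries A (m+1) : Set A) :=
          mem_starSet trivial (neg_mem hy)
        rw [key] at this
        simpa using neg_mem this

end WT

lemma left_step_antitone : ∀ n, leftSeries A (n + 1) ≤ leftSeries A n := by
  intro n
  induction n with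
  | zero => exact le_top
  | succ n ih =>
    show starSet Set.univ (leftSeries A (n+1) : Set A)
        ≤ starSet Set.univ (leftSeries A n : Set A)
    exact starSet_mono (fun _ _ => trivial) ih

lemma left_antitone : ∀ {m n : ℕ}, m ≤ n → leftSeries A n ≤ leftSeries A m := by
  intro m n hmn
  induction n with
  | zero => simpa [Nat.le_zero.mp hmn] using le_rfl
  | succ n ih =>
    rcases Nat.lt_or_ge m (n+1) with hl | hl
    · exact (left_step_antitone n).trans (ih (Nat.lt_succ_iff.mp hl))
    · have : m = n + 1 := le_antisymm hmn hl
      subst this; exact le_rfl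

/-- weight function: `w 0 = 0`, `w (n+1) = w ((n+1)/2) + 1`. -/
def w : ℕ → ℕ
  | 0 => 0
  | n + 1 => w ((n + 1) / 2) + 1
  decreasing_by omega

lemma w_succ (n : ℕ) : w (n + 1) = w ((n + 1) / 2) + 1 := by rw [w]

lemma w_mono : ∀ n, ∀ m ≤ n, w m ≤ w n := by
  intro n
  induction n using Nat.strong_induction_on with
  | _ n ih =>
    intro m hm
    match n, m with
    | _, 0 => simp [w]
    | n + 1, m + 1 =>
      rw [w_succ, w_succ]
      have h1 : (m + 1) / 2 ≤ (n + 1) / 2 := by omega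
      have h2 : (n + 1) / 2 < n + 1 := by omega
      exact Nat.succ_le_succ (ih _ h2 _ h1)

lemma w_pow (N : ℕ) : N ≤ w (2 ^ N) := by
  induction N with
  | zero => simp
  | succ N ih =>
    have h2 : 2 ^ (N + 1) = 2 ^ N * 2 := by ring
    have hpos : 0 < 2 ^ (N + 1) := Nat.pow_pos (by norm_num)
    obtain ⟨k, hk⟩ : ∃ k, 2 ^ (N + 1) = k + 1 := ⟨2 ^ (N+1) - 1, by omega⟩
    rw [hk, w_succ, ← hk]
    have : 2 ^ (N + 1) / 2 = 2 ^ N := by omega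
    rw [this]
    omega

lemma starSet_le_right (X : Set A) (q : ℕ) :
    starSet X (leftSeries A q : Set A) ≤ leftSeries A (q + 1) :=
  starSet_mono (fun _ _ => trivial) (fun _ hx => hx)

lemma starSet_le_left (h : IsWeaklyTrivial A) (p : ℕ) (Y : Set A) :
    starSet (leftSeries A (p + 1) : Set A) Y ≤ leftSeries A (p + 2) := by
  have h1 : starSet (leftSeries A (p + 1) : Set A) Y
      ≤ starSet (rightSeries A (p + 1) : Set A) Set.univ := by
    rw [← LR_eq h]
    exact starSet_mono (fun _ hx => hx) (fun _ _ => trivial)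
  have h2 : starSet (rightSeries A (p + 1) : Set A) Set.univ = rightSeries A (p + 2) := rfl
  rw [h2, ← LR_eq h] at h1
  exact h1

lemma strong_le_left (h : IsWeaklyTrivial A) : ∀ n, strongSeries A n ≤ leftSeries A (w n) := by
  intro n
  induction n using Nat.strong_induction_on with
  | _ n ih =>
    match n with
    | 0 =>
      have h0 : w 0 = 0 := by rw [w]
      rw [h0]
      exact le_top
    | n + 1 =>
      rw [strongSeries]
      apply iSup_le
      intro i
      have hi : i.val ≤ n := Nat.lt_succ_iff.mp i.isLt
      set p := i.val with hp
      have ih1 : (strongSeries A p : Set A) ⊆ (leftSeries A (w p) : Set A) :=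
        fun x hx => ih p (by omega) hx
      have ih2 : (strongSeries A (n - p) : Set A) ⊆ (leftSeries A (w (n - p)) : Set A) :=
        fun x hx => ih (n - p) (by omega) hx
      have hmono : starSet (strongSeries A p : Set A) (strongSeries A (n - p) : Set A)
          ≤ starSet (leftSeries A (w p) : Set A) (leftSeries A (w (n - p)) : Set A) :=
        starSet_mono ih1 ih2
      by_cases hc : w (n + 1) ≤ w (n - p) + 1
      · exact hmono.trans ((starSet_le_right _ _).trans (left_antitone hc))
      · -- in this branch `p ≥ (n+1)/2 ≥ 1`
        have hσ : w (n + 1) = w ((n + 1) / 2) + 1 := w_succ n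
        have hn1 : 1 ≤ n := by
          by_contra hn
          have hn0 : n = 0 := by omega
          subst hn0
          have hp0 : p = 0 := by omega
          apply hc
          rw [hσ, hp0]
        have hcases : (n + 1) / 2 ≤ p ∨ (n + 1) / 2 ≤ n - p := by omega
        have hple : (n + 1) / 2 ≤ p := by
          rcases hcases with h' | h'
          · exact h'
          · exact absurd (by rw [hσ]; exact Nat.succ_le_succ (w_mono _ _ h')) hc
        have hw1 : w 1 = 1 := by rw [w_succ]; norm_num [w]
        have hwp : 1 ≤ w p := by
          have := w_mono p 1 (by omega)
          omega
        have hle2 : w (n + 1) ≤ w p + 1 := by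
          rw [hσ]; exact Nat.succ_le_succ (w_mono p _ hple)
        obtain ⟨k, hk⟩ : ∃ k, w p = k + 1 := ⟨w p - 1, by omega⟩
        refine hmono.trans ?_
        rw [hk]
        exact (starSet_le_left h k _).trans (left_antitone (by omega))

lemma left_le_strong : ∀ n, leftSeries A n ≤ strongSeries A n := by
  intro n
  induction n with
  | zero =>
    rw [strongSeries]
    exact le_top
  | succ n ih =>
    have h1 : leftSeries A (n + 1) ≤ starSet (Set.univ : Set A) (strongSeries A n : Set A) :=
      starSet_mono (fun _ _ => trivial) (fun x hx => ih hx)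
    refine h1.trans ?_
    rw [strongSeries]
    have h2 : starSet (Set.univ : Set A) (strongSeries A n : Set A)
        = starSet (strongSeries A ((⟨0, Nat.succ_pos n⟩ : Fin (n+1)) : ℕ) : Set A)
            (strongSeries A (n - ((⟨0, Nat.succ_pos n⟩ : Fin (n+1)) : ℕ)) : Set A) := by
      norm_num
      rw [strongSeries]
      norm_num
    rw [h2]
    exact le_iSup (fun i : Fin (n + 1) =>
      starSet (strongSeries A i.val : Set A) (strongSeries A (n - i.val) : Set A)) _

end SBProof

open SkewBrace SBProof in
/-- For a weakly trivial skew brace, left nilpotency, right nilpotency and strong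
nilpotency are equivalent. -/
theorem isWeaklyTrivial_nilpotency_tfae (A : Type*) [SkewBrace A]
    (h : IsWeaklyTrivial A) :
    (IsLeftNilpotent A ↔ IsRightNilpotent A) ∧
    (IsLeftNilpotent A ↔ IsStronglyNilpotent A) := by
  constructor
  · constructor
    · rintro ⟨n, hn⟩
      exact ⟨n, (LR_eq h n).symm.trans hn⟩
    · rintro ⟨n, hn⟩
      exact ⟨n, (LR_eq h n).trans hn⟩
  · constructor
    · rintro ⟨n, hn⟩
      refine ⟨2 ^ n, le_bot_iff.mp ?_⟩
      calc strongSeries A (2 ^ n) ≤ leftSeries A (w (2 ^ n)) := strong_le_left h _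
        _ ≤ leftSeries A n := left_antitone (w_pow n)
        _ = ⊥ := hn
    · rintro ⟨n, hn⟩
      refine ⟨n, le_bot_iff.mp ?_⟩
      calc leftSeries A n ≤ strongSeries A n := left_le_strong n
        _ = ⊥ := hn
end

section
/- Let A be a two-sided skew brace. Then the subgroups A² and A²_op of (A,+) centralize one another in (A,+): for all a,b,c,d ∈ A one has b*_op c + a*d = a*d + b*_op c. -/
open SkewBrace in
/-- In a two-sided skew brace, `A²` and `A²ₒₚ` centralize one another in `(A,+)`:
`b *ₒₚ c + a * d = a * d + b *ₒₚ c` for all `a,b,c,d`. -/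
theorem sq_sqOp_commute (A : Type*) [SkewBrace A] (h : IsTwoSided A) (a b c d : A) :
    bstarOp b c + bstar a d = bstar a d + bstarOp b c := by
  have e1 : (a + b) * (c + d) = a * c + ((-c + b * c - b) + (-a + a * d - d)) + b * d := by
    rw [mul_add_eq, h a b c, h a b d]
    simp [sub_eq_add_neg, neg_add, add_assoc]
  have e2 : (a + b) * (c + d) = a * c + ((-a + a * d - d) + (-c + b * c - b)) + b * d := by
    rw [h a b (c + d), mul_add_eq, mul_add_eq]
    simp [sub_eq_add_neg, neg_add, add_assoc]
  have key0 := e1.symm.trans e2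
  have key1 : (-c + b * c - b) + (-a + a * d - d) + b * d
      = (-a + a * d - d) + (-c + b * c - b) + b * d := by
    rw [add_assoc (a * c), add_assoc (a * c)] at key0
    exact add_left_cancel key0
  have key : (-c + b * c - b) + (-a + a * d - d)
      = (-a + a * d - d) + (-c + b * c - b) := add_right_cancel key1
  simpa [bstar, bstarOp] using key
end

section
/- Let A be a two-sided skew brace. Then A² ∩ A²_op is contained in the center of the group (A² + A²_op, +). In particular the group (A² ∩ A²_op, +) is abelian, so A² ∩ A²_op is a two-sided brace. -/
section Aux

variable {A : Type*} [SkewBrace A]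

open SkewBrace

private theorem grp_cancel {G : Type*} [AddGroup G] (u v b c r : G)
    (h : b + (u + (-b + (c + (v + (b + r))))) = c + (v + (b + (-c + (u + (c + r)))))) :
    u + (-b + (c + (v + (b + -c)))) = (-b + (c + (v + (b + -c)))) + u := by
  have h2 : b + ((u + (-b + (c + (v + (b + -c))))) + (c + r))
      = b + (((-b + (c + (v + (b + -c)))) + u) + (c + r)) := by
    simpa only [add_assoc, neg_add_cancel_left, add_neg_cancel_left] using h
  exact add_right_cancel (add_left_cancel h2)

private theorem route1 (h : IsTwoSided A) (a b c d : A) :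
    bstar (a + c) (b + d)
      = -c + (bstar a b + b + bstar a d - b) + c + (bstar c b + b + bstar c d - b) := by
  simp only [bstar]
  rw [h a c (b + d), SkewBrace.mul_add_eq a b d, SkewBrace.mul_add_eq c b d]
  simp only [sub_eq_add_neg, neg_add_rev, add_assoc, neg_add_cancel_left,
    add_neg_cancel_left]

private theorem route2 (h : IsTwoSided A) (a b c d : A) :
    bstar (a + c) (b + d)
      = (-c + bstar a b + c + bstar c b) + b + (-c + bstar a d + c + bstar c d) - b := by
  simp only [bstar]
  rw [SkewBrace.mul_add_eq (a + c) b d, h a c b, h a c d]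
  simp only [sub_eq_add_neg, neg_add_rev, add_assoc, neg_add_cancel_left,
    add_neg_cancel_left]

/-- The key commutation: in a two-sided skew brace, every `a * d` commutes
additively with every `c *ₒₚ b`. -/
private theorem star_comm_starOp (h : IsTwoSided A) (a d c b : A) :
    bstar a d + bstarOp c b = bstarOp c b + bstar a d := by
  have h0 := (route1 h a b c d).symm.trans (route2 h a b c d)
  simp only [sub_eq_add_neg, add_assoc] at h0
  have h2 := add_left_cancel (add_left_cancel h0)
  have h3 := grp_cancel (bstar a d) (bstar c b) b c (bstar c d + -b) h2
  have ht : (-b + (c + (bstar c b + (b + -c)))) = bstarOp c b := by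
    simp only [bstar, bstarOp, sub_eq_add_neg, add_assoc, neg_add_cancel_left,
      add_neg_cancel_left]
  rw [ht] at h3
  exact h3

private theorem sq_comm_sqOp (h : IsTwoSided A) :
    ∀ x ∈ sq A, ∀ y ∈ sqOp A, x + y = y + x := by
  have stage1 : ∀ c d : A, sq A ≤ AddSubgroup.centralizer {bstarOp c d} := by
    intro c d
    unfold SkewBrace.sq SkewBrace.starSet
    refine (AddSubgroup.closure_le _).2 ?_
    rintro z ⟨a, -, b, -, rfl⟩
    refine AddSubgroup.mem_centralizer_iff.2 ?_
    rintro g hg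
    rw [Set.mem_singleton_iff] at hg
    subst hg
    exact (star_comm_starOp h a b c d).symm
  intro x hx y hy
  have stage2 : sqOp A ≤ AddSubgroup.centralizer {x} := by
    unfold SkewBrace.sqOp
    refine (AddSubgroup.closure_le _).2 ?_
    rintro z ⟨c, d, rfl⟩
    refine AddSubgroup.mem_centralizer_iff.2 ?_
    rintro g hg
    rw [Set.mem_singleton_iff] at hg
    subst hg
    exact (AddSubgroup.mem_centralizer_iff.1 (stage1 c d hx) _ rfl).symm
  exact AddSubgroup.mem_centralizer_iff.1 (stage2 hy) x rfl

end Aux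

open SkewBrace in
/-- In a two-sided skew brace, `A² ⊓ A²ₒₚ` is contained in the center of the group
`(A² + A²ₒₚ, +)`; in particular `(A² ⊓ A²ₒₚ, +)` is abelian, so `A² ⊓ A²ₒₚ` is a
two-sided brace. -/
theorem sq_inf_sqOp_le_center (A : Type*) [SkewBrace A] (h : IsTwoSided A) :
    (∀ x ∈ sq A ⊓ sqOp A, ∀ y ∈ sq A ⊔ sqOp A, x + y = y + x) ∧
    (∀ x ∈ sq A ⊓ sqOp A, ∀ y ∈ sq A ⊓ sqOp A, x + y = y + x) := by
  have main : ∀ x ∈ sq A ⊓ sqOp A, ∀ y ∈ sq A ⊔ sqOp A, x + y = y + x := by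
    intro x hx y hy
    obtain ⟨hx1, hx2⟩ := hx
    have hsq : sq A ≤ AddSubgroup.centralizer {x} := by
      intro g hg
      refine AddSubgroup.mem_centralizer_iff.2 ?_
      rintro z hz
      rw [Set.mem_singleton_iff] at hz
      rw [hz]
      exact (sq_comm_sqOp h g hg x hx2).symm
    have hop : sqOp A ≤ AddSubgroup.centralizer {x} := by
      intro g hg
      refine AddSubgroup.mem_centralizer_iff.2 ?_
      rintro z hz
      rw [Set.mem_singleton_iff] at hz
      rw [hz]
      exact sq_comm_sqOp h x hx1 g hg
    exact AddSubgroup.mem_centralizer_iff.1 (sup_le hsq hop hy) x rfl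
  exact ⟨main, fun x hx y hy => main x hx y ((le_sup_left : sq A ≤ sq A ⊔ sqOp A) ((inf_le_left : sq A ⊓ sqOp A ≤ sq A) hy))⟩
end

section
/- Let A be a two-sided skew brace and m ≥ 1 such that A^(m) ⊆ Z(A,+). Then for all k ≥ 1: A^(m+k) = A^(m) * A^(k), and A^(mk) = (A^(m))^(k) (the k-th term of the right series of the subskew brace A^(m)). -/
namespace SkewBrace

/-- The right series of the subskew brace `S` of `A` (computed inside `A`):
`relRightSeries A S 0 = S = S⁽¹⁾` and `relRightSeries A S (k+1) = relRightSeries A S k * S`,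
so `relRightSeries A S k` is `S⁽ᵏ⁺¹⁾`. -/
def relRightSeries (A : Type*) [SkewBrace A] (S : AddSubgroup A) : ℕ → AddSubgroup A
  | 0 => S
  | k + 1 => starSet (relRightSeries A S k : Set A) (S : Set A)

end SkewBrace

namespace SkewBrace

variable {A : Type*} [SkewBrace A]

private def lam (a b : A) : A := -a + a * b

private lemma lam_add (a b c : A) : lam a (b + c) = lam a b + lam a c := by
  simp [lam, mul_add_eq, sub_eq_add_neg, add_assoc]

private def lamHom (a : A) : A →+ A := AddMonoidHom.mk' (lam a) (lam_add a)

private lemma lam_zero (a : A) : lam a 0 = 0 := (lamHom a).map_zero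
private lemma lam_neg (a b : A) : lam a (-b) = -(lam a b) := (lamHom a).map_neg b
private lemma lam_sub (a b c : A) : lam a (b - c) = lam a b - lam a c := (lamHom a).map_sub b c

private lemma mul_zero' (a : A) : a * 0 = a := by
  have h := lam_zero a
  have := neg_add_eq_zero.mp h
  exact this.symm

private lemma zero_mul' (b : A) : (0 : A) * b = b := by
  have h0 : (0 : A) = 1 := by
    have := mul_zero' (1 : A)
    rwa [one_mul] at this
  rw [h0, one_mul]

private lemma bstar_lam (a b : A) : bstar a b = lam a b - b := rfl

private lemma bstar_zero_right (a : A) : bstar a 0 = 0 := by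
  rw [bstar_lam, lam_zero, zero_sub, neg_zero]

private lemma bstar_zero_left (b : A) : bstar 0 b = 0 := by
  simp [bstar, zero_mul']

private lemma lam_comp (a b c : A) : lam (a * b) c = lam a (lam b c) := by
  have h : lam a (lam b c) = lam a (-b) + lam a (b * c) := by
    rw [← lam_add]; rfl
  rw [h, lam_neg]
  simp [lam, mul_assoc, add_assoc, neg_add_rev]

/-- `(a∘b)*c = a*(b*c) + b*c + a*c` in any skew brace. -/
private lemma bstar_mul_left (a b c : A) :
    bstar (a * b) c = bstar a (bstar b c) + bstar b c + bstar a c := by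
  rw [bstar_lam (a*b), bstar_lam a (bstar b c), bstar_lam b, bstar_lam a c, lam_comp,
    sub_add_cancel, lam_sub]
  simp [sub_eq_add_neg, add_assoc]

private lemma comm_neg {G : Type*} [SubtractionMonoid G] {s : G}
    (hs : ∀ g : G, g + s = s + g) (g : G) : g + -s = -s + g := by
  have h := congrArg Neg.neg (hs (-g))
  simpa [neg_add_rev] using h.symm

/-- `(a+b)*c = -b + a*c + b + b*c` in a two-sided skew brace. -/
private lemma bstar_add_left (h : IsTwoSided A) (a b c : A) :
    bstar (a + b) c = -b + bstar a c + b + bstar b c := by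
  simp [bstar, h a b c, sub_eq_add_neg, add_assoc, neg_add_rev]

private lemma bstar_add_left_central (h : IsTwoSided A) {b : A} (a c : A)
    (hb : ∀ g : A, g + b = b + g) :
    bstar (a + b) c = bstar a c + bstar b c := by
  rw [bstar_add_left h, add_assoc (-b) (bstar a c) b, hb (bstar a c), neg_add_cancel_left]

private lemma bstar_neg_left_central (h : IsTwoSided A) {b : A} (c : A)
    (hb : ∀ g : A, g + b = b + g) :
    bstar (-b) c = -(bstar b c) := by
  have h0 : bstar b c + bstar (-b) c = 0 := by
    rw [← bstar_add_left_central h b c (fun g => comm_neg hb g), add_neg_cancel,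
      bstar_zero_left]
  exact eq_neg_of_add_eq_zero_right h0

private lemma bstar_neg_left_central' (h : IsTwoSided A) {a : A} (c : A)
    (h1 : ∀ g : A, g + bstar a c = bstar a c + g) :
    bstar (-a) c = -(bstar a c) := by
  have h0 := bstar_add_left h a (-a) c
  rw [add_neg_cancel, bstar_zero_left, neg_neg] at h0
  have h2 : a + bstar a c + -a + bstar (-a) c = 0 := h0.symm
  rw [h1 a, add_assoc (bstar a c) a (-a), add_neg_cancel, add_zero] at h2
  exact eq_neg_of_add_eq_zero_right h2

private lemma bstar_neg_left_general (h : IsTwoSided A) (b c : A) :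
    bstar (-b) c = b + -(bstar b c) + -b := by
  have h0 := bstar_add_left h b (-b) c
  rw [add_neg_cancel, bstar_zero_left, neg_neg] at h0
  have h2 : b + bstar b c + -b + bstar (-b) c = 0 := h0.symm
  have h3 := eq_neg_of_add_eq_zero_right h2
  rw [h3]
  simp [neg_add_rev, add_assoc]

private lemma bstar_add_right_central (x z₁ z₂ : A)
    (hc : ∀ g : A, g + bstar x z₂ = bstar x z₂ + g) :
    bstar x (z₁ + z₂) = bstar x z₁ + bstar x z₂ := by
  rw [bstar_lam x (z₁ + z₂), lam_add, bstar_lam x z₁, bstar_lam x z₂]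
  have hc' : ∀ g : A, g + (lam x z₂ - z₂) = (lam x z₂ - z₂) + g := hc
  calc lam x z₁ + lam x z₂ - (z₁ + z₂)
      = lam x z₁ + ((lam x z₂ - z₂) + -z₁) := by
        simp [sub_eq_add_neg, add_assoc, neg_add_rev]
    _ = lam x z₁ + (-z₁ + (lam x z₂ - z₂)) := by rw [← hc' (-z₁)]
    _ = (lam x z₁ - z₁) + (lam x z₂ - z₂) := by
        simp [sub_eq_add_neg, add_assoc]

private lemma bstar_neg_right_central (x z : A)
    (hc : ∀ g : A, g + bstar x (-z) = bstar x (-z) + g) :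
    bstar x (-z) = -(bstar x z) := by
  have h0 : bstar x z + bstar x (-z) = 0 := by
    rw [← bstar_add_right_central x z (-z) hc, add_neg_cancel, bstar_zero_right]
  exact eq_neg_of_add_eq_zero_right h0

private lemma aux_word {G : Type*} [AddGroup G] (ab b s t u : G)
    (hs : ∀ g : G, g + s = s + g) (ht : ∀ g : G, g + t = t + g) :
    b + (-ab + -s + ab + (t + u + s)) + -b + (b + -u + -b) = t := by
  rw [comm_neg hs (-ab), add_assoc (-s) (-ab) ab, neg_add_cancel, add_zero,
    hs (t + u), neg_add_cancel_left, ← add_assoc b t u, ht b, add_assoc t b u,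
    show b + -u + -b = -(b + u + -b) by simp [neg_add_rev, add_assoc],
    add_assoc t (b + u) (-b)]
  exact add_neg_cancel_right t _

private lemma bstar_bstar (h : IsTwoSided A) (a b c : A)
    (h1 : ∀ g : A, g + bstar a c = bstar a c + g)
    (h2 : ∀ g : A, g + bstar a (bstar b c) = bstar a (bstar b c) + g) :
    bstar (bstar a b) c = bstar a (bstar b c) := by
  have e1 : bstar a b = (-a + a * b) + -b := by rw [bstar, sub_eq_add_neg]
  rw [e1, bstar_add_left h, neg_neg, bstar_add_left h, bstar_neg_left_central' h c h1,
    bstar_mul_left, bstar_neg_left_general h]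
  exact aux_word (a * b) b (bstar a c) (bstar a (bstar b c)) (bstar b c) h1 h2

private lemma bstar_mem_starSet {X Y : Set A} {x y : A} (hx : x ∈ X) (hy : y ∈ Y) :
    bstar x y ∈ starSet X Y :=
  AddSubgroup.subset_closure ⟨x, hx, y, hy, rfl⟩

private lemma starSet_mono {X X' Y Y' : Set A} (hX : X ⊆ X') (hY : Y ⊆ Y') :
    starSet X Y ≤ starSet X' Y' :=
  AddSubgroup.closure_mono (by rintro z ⟨x, hx, y, hy, rfl⟩; exact ⟨x, hX hx, y, hY hy, rfl⟩)

private lemma rightSeries_succ_le (n : ℕ) : rightSeries A (n + 1) ≤ rightSeries A n := by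
  induction n with
  | zero => exact le_top
  | succ n ih =>
    show starSet (rightSeries A (n + 1) : Set A) Set.univ ≤
      starSet (rightSeries A n : Set A) Set.univ
    exact starSet_mono (SetLike.coe_subset_coe.mpr ih) subset_rfl

private lemma rightSeries_antitone {p n : ℕ} (hpn : p ≤ n) :
    rightSeries A n ≤ rightSeries A p := by
  induction n, hpn using Nat.le_induction with
  | base => exact le_rfl
  | succ n hn ih => exact (rightSeries_succ_le n).trans ih

private lemma key (h : IsTwoSided A) (p : ℕ) (hp : rightSeries A p ≤ AddSubgroup.center A) :
    ∀ k : ℕ, rightSeries A (p + k + 1) =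
      starSet (rightSeries A p : Set A) (rightSeries A k : Set A) := by
  have hgen : ∀ x ∈ rightSeries A p, ∀ z g : A, g + bstar x z = bstar x z + g := by
    intro x hx z g
    have hmem : bstar x z ∈ rightSeries A (p + 1) :=
      bstar_mem_starSet hx (Set.mem_univ z)
    exact AddSubgroup.mem_center_iff.mp (hp (rightSeries_succ_le p hmem)) g
  intro k
  induction k with
  | zero =>
    show starSet (rightSeries A p : Set A) Set.univ = _
    rw [show rightSeries A 0 = (⊤ : AddSubgroup A) from rfl, AddSubgroup.coe_top]
  | succ k ih =>
    have hc : ∀ w ∈ starSet (rightSeries A p : Set A) (rightSeries A k : Set A),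
        ∀ g : A, g + w = w + g := by
      intro w hw g
      have h1 : starSet (rightSeries A p : Set A) (rightSeries A k : Set A) ≤
          rightSeries A (p + 1) := starSet_mono subset_rfl (Set.subset_univ _)
      exact AddSubgroup.mem_center_iff.mp (hp (rightSeries_succ_le p (h1 hw))) g
    show starSet (rightSeries A (p + k + 1) : Set A) Set.univ = _
    rw [ih]
    apply le_antisymm
    · show AddSubgroup.closure _ ≤ _
      rw [AddSubgroup.closure_le]
      rintro z ⟨w, hw, c, -, rfl⟩
      refine AddSubgroup.closure_induction
        (p := fun w _ => bstar w c ∈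
          starSet (rightSeries A p : Set A) (rightSeries A (k + 1) : Set A))
        ?_ ?_ ?_ ?_ hw
      · rintro w ⟨x, hx, y, hy, rfl⟩
        rw [bstar_bstar h x y c (hgen x hx c) (hgen x hx (bstar y c))]
        exact bstar_mem_starSet hx (bstar_mem_starSet hy (Set.mem_univ c))
      · show bstar (0 : A) c ∈ starSet (rightSeries A p : Set A) (rightSeries A (k + 1) : Set A)
        rw [bstar_zero_left]; exact zero_mem _
      · intro w1 w2 hw1 hw2 p1 p2
        rw [bstar_add_left_central h w1 c (hc w2 hw2)]
        exact add_mem p1 p2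
      · intro w hw pw
        rw [bstar_neg_left_central h c (hc w hw)]
        exact neg_mem pw
    · show AddSubgroup.closure _ ≤ _
      rw [AddSubgroup.closure_le]
      rintro z ⟨x, hx, w, hw, rfl⟩
      refine AddSubgroup.closure_induction
        (p := fun w _ => bstar x w ∈
          starSet ((starSet (rightSeries A p : Set A) (rightSeries A k : Set A) :
            AddSubgroup A) : Set A) Set.univ)
        ?_ ?_ ?_ ?_ hw
      · rintro w ⟨y, hy, cc, -, rfl⟩
        rw [← bstar_bstar h x y cc (hgen x hx cc) (hgen x hx (bstar y cc))]
        exact bstar_mem_starSet (bstar_mem_starSet hx hy) (Set.mem_univ cc)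
      · show bstar x (0 : A) ∈ starSet ((starSet (rightSeries A p : Set A)
            (rightSeries A k : Set A) : AddSubgroup A) : Set A) Set.univ
        rw [bstar_zero_right]; exact zero_mem _
      · intro w1 w2 _ _ p1 p2
        rw [bstar_add_right_central x w1 w2 (hgen x hx w2)]
        exact add_mem p1 p2
      · intro w _ pw
        rw [bstar_neg_right_central x w (hgen x hx (-w))]
        exact neg_mem pw

private lemma key2 (h : IsTwoSided A) (m : ℕ)
    (hm : rightSeries A m ≤ AddSubgroup.center A) :
    ∀ k : ℕ, rightSeries A ((m + 1) * (k + 1) - 1) =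
      relRightSeries A (rightSeries A m) k := by
  intro k
  induction k with
  | zero =>
    show rightSeries A ((m + 1) * 1 - 1) = rightSeries A m
    rw [show (m + 1) * 1 - 1 = m by omega]
  | succ k ih =>
    have h1 : m + 1 ≤ (m + 1) * (k + 1) := Nat.le_mul_of_pos_right _ (Nat.succ_pos k)
    have hn : m ≤ (m + 1) * (k + 1) - 1 := by omega
    have hcen : rightSeries A ((m + 1) * (k + 1) - 1) ≤ AddSubgroup.center A :=
      (rightSeries_antitone hn).trans hm
    have e := key h ((m + 1) * (k + 1) - 1) hcen m
    have goal_eq : relRightSeries A (rightSeries A m) (k + 1) =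
        starSet ((rightSeries A ((m + 1) * (k + 1) - 1)) : Set A)
          (rightSeries A m : Set A) := by
      show starSet (relRightSeries A (rightSeries A m) k : Set A) _ = _
      rw [ih]
    rw [goal_eq, ← e]
    congr 1
    have h2 : (m + 1) * (k + 1 + 1) = (m + 1) * (k + 1) + (m + 1) := by ring
    omega

end SkewBrace


open SkewBrace in
/-- Let `A` be a two-sided skew brace and `m ≥ 1` with `A⁽ᵐ⁾ ⊆ Z(A,+)`. Then for all
`k ≥ 1`, `A⁽ᵐ⁺ᵏ⁾ = A⁽ᵐ⁾ * A⁽ᵏ⁾` and `A⁽ᵐᵏ⁾ = (A⁽ᵐ⁾)⁽ᵏ⁾`. Here `rightSeries A m`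
denotes `A⁽ᵐ⁺¹⁾` and `relRightSeries A (rightSeries A m) k` denotes `(A⁽ᵐ⁺¹⁾)⁽ᵏ⁺¹⁾`. -/
theorem rightSeries_add_and_mul (A : Type*) [SkewBrace A] (h : IsTwoSided A) (m : ℕ)
    (hm : rightSeries A m ≤ AddSubgroup.center A) (k : ℕ) :
    rightSeries A (m + k + 1) =
      starSet (rightSeries A m : Set A) (rightSeries A k : Set A) ∧
    rightSeries A ((m + 1) * (k + 1) - 1) = relRightSeries A (rightSeries A m) k := by
  exact ⟨key h m hm k, key2 h m hm k⟩
end
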